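/- Assume Y = K acts on itself by the regular representation and H ≤ Perm(X) is transitive. Then the normalizer N of W = H ≀ K in Perm(Z) satisfies N = (Γ(Aut(K)) · Λ(K)) · (N ∩ S_K(Z)), i.e., every element of N is a product of an element of Γ(Aut(K)), an element of Λ(K), and an element of N ∩ S_K(Z). -/

import Mathlib

open Equiv

/-- The block `X_y = X × {y}` inside `Z = X × Y`. -/
def block (X Y : Type*) (y : Y) : Set (X × Y) := {p | p.2 = y}

/-- The subgroup `S_Y(Z)` of all permutations of `Z = X × Y` stabilizing every block `X_y`. -/
def blockStab (X Y : Type*) : Subgroup (Perm (X × Y)) where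
  carrier := {f | ∀ y : Y, f '' block X Y y = block X Y y}
  one_mem' := by intro y; simp
  mul_mem' := by
    intro f g hf hg y
    have hfg : ⇑(f * g) = ⇑f ∘ ⇑g := rfl
    rw [hfg, Set.image_comp, hg y, hf y]
  inv_mem' := by
    intro f hf y
    have h1 : ⇑f '' block X Y y = block X Y y := hf y
    calc ⇑f⁻¹ '' block X Y y = ⇑f⁻¹ '' (⇑f '' block X Y y) := by rw [h1]
      _ = block X Y y := by
          rw [← Set.image_comp]
          have h2 : ⇑f⁻¹ ∘ ⇑f = id := by funext p; simp
          rw [h2, Set.image_id]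

/-- For `h` a permutation of `X` and `y ∈ Y`, the permutation `h_y` of `Z = X × Y`
acting as `h` on the block `X_y` and fixing everything else. -/
noncomputable def fiberPerm (X Y : Type*) (h : Perm X) (y : Y) : Perm (X × Y) :=
  letI := Classical.decEq Y
  { toFun := fun p => if p.2 = y then (h p.1, p.2) else p
    invFun := fun p => if p.2 = y then (h.symm p.1, p.2) else p
    left_inv := fun p => by
      obtain ⟨x, y'⟩ := p
      by_cases hp : y' = y <;> simp [hp]
    right_inv := fun p => by
      obtain ⟨x, y'⟩ := p
      by_cases hp : y' = y <;> simp [hp] }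

lemma fiberPerm_apply_eq (X Y : Type*) (h : Perm X) (y : Y) (x : X) :
    fiberPerm X Y h y (x, y) = (h x, y) := by
  simp [fiberPerm]

lemma fiberPerm_apply_ne (X Y : Type*) (h : Perm X) (y : Y) (p : X × Y) (hp : p.2 ≠ y) :
    fiberPerm X Y h y p = p := by
  simp [fiberPerm, hp]

/-- The homomorphism `h ↦ h_y`. -/
noncomputable def fiberHom (X Y : Type*) (y : Y) : Perm X →* Perm (X × Y) where
  toFun h := fiberPerm X Y h y
  map_one' := by
    refine Equiv.ext fun p => ?_
    by_cases hp : p.2 = y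
    · obtain ⟨x, y'⟩ := p; subst hp; simp [fiberPerm_apply_eq]
    · simp [fiberPerm_apply_ne _ _ _ _ _ hp]
  map_mul' := by
    intro h1 h2
    refine Equiv.ext fun p => ?_
    by_cases hp : p.2 = y
    · obtain ⟨x, y'⟩ := p
      subst hp
      simp [Perm.mul_apply, fiberPerm_apply_eq]
    · simp [Perm.mul_apply, fiberPerm_apply_ne _ _ _ _ _ hp]

/-- The embedding `Λ` of permutations of `Y` into permutations of `Z = X × Y`,
`Λ(k)(x,y) = (x, k(y))`. -/
def lamHom (X Y : Type*) : Perm Y →* Perm (X × Y) where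
  toFun k := (Equiv.refl X).prodCongr k
  map_one' := Equiv.ext fun p => rfl
  map_mul' := fun k1 k2 => Equiv.ext fun p => rfl

lemma lamHom_apply (X Y : Type*) (k : Perm Y) (x : X) (y : Y) :
    lamHom X Y k (x, y) = (x, k y) := rfl

/-- The base group `B` of the wreath product: all permutations of `Z = X × Y`
stabilizing each block `X_y` and restricting to an element of `H_y` on it. -/
def baseGroup (X Y : Type*) (H : Subgroup (Perm X)) : Subgroup (Perm (X × Y)) where
  carrier := {f | ∀ y : Y, ∃ h ∈ H, ∀ x : X, f (x, y) = (h x, y)}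
  one_mem' := fun y => ⟨1, H.one_mem, fun x => rfl⟩
  mul_mem' := by
    rintro f g hf hg y
    obtain ⟨hg', hgH, hgeq⟩ := hg y
    obtain ⟨hf', hfH, hfeq⟩ := hf y
    refine ⟨hf' * hg', H.mul_mem hfH hgH, fun x => ?_⟩
    have : (f * g) (x, y) = f (g (x, y)) := rfl
    rw [this, hgeq x, hfeq (hg' x)]
    rfl
  inv_mem' := by
    rintro f hf y
    obtain ⟨h, hH, heq⟩ := hf y
    refine ⟨h⁻¹, H.inv_mem hH, fun x => ?_⟩
    have h1 : f ((h⁻¹ : Perm X) x, y) = (x, y) := by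
      rw [heq]
      simp
    calc f⁻¹ (x, y) = f⁻¹ (f ((h⁻¹ : Perm X) x, y)) := by rw [h1]
      _ = ((h⁻¹ : Perm X) x, y) := by simp

lemma mem_baseGroup_iff (X Y : Type*) (H : Subgroup (Perm X)) (f : Perm (X × Y)) :
    f ∈ baseGroup X Y H ↔ ∀ y : Y, ∃ h ∈ H, ∀ x : X, f (x, y) = (h x, y) := Iff.rfl

lemma lam_conj_base (X Y : Type*) {H : Subgroup (Perm X)} (k : Perm Y) {b : Perm (X × Y)}
    (hb : b ∈ baseGroup X Y H) : (lamHom X Y k)⁻¹ * b * lamHom X Y k ∈ baseGroup X Y H := by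
  intro y
  obtain ⟨h, hH, heq⟩ := hb (k y)
  refine ⟨h, hH, fun x => ?_⟩
  have h2 : ((lamHom X Y k)⁻¹ : Perm (X × Y)) (h x, k y) = (h x, y) := by
    have h3 : (lamHom X Y k) (h x, y) = (h x, k y) := rfl
    rw [← h3]
    simp
  calc ((lamHom X Y k)⁻¹ * b * lamHom X Y k) (x, y)
      = (lamHom X Y k)⁻¹ (b ((lamHom X Y k) (x, y))) := rfl
    _ = (lamHom X Y k)⁻¹ (b (x, k y)) := rfl
    _ = (lamHom X Y k)⁻¹ (h x, k y) := by rw [heq x]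
    _ = (h x, y) := h2

/-- The unrestricted wreath product `W = H ≀ K ≤ Perm(X × Y)`, namely the
internal product `Λ(K)·B`. -/
def wreath (X Y : Type*) (H : Subgroup (Perm X)) (K : Subgroup (Perm Y)) :
    Subgroup (Perm (X × Y)) where
  carrier := {w | ∃ k ∈ K, ∃ b ∈ baseGroup X Y H, w = lamHom X Y k * b}
  one_mem' := ⟨1, K.one_mem, 1, (baseGroup X Y H).one_mem, by simp⟩
  mul_mem' := by
    rintro w1 w2 ⟨k1, hk1, b1, hb1, rfl⟩ ⟨k2, hk2, b2, hb2, rfl⟩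
    refine ⟨k1 * k2, K.mul_mem hk1 hk2, ((lamHom X Y k2)⁻¹ * b1 * lamHom X Y k2) * b2,
      (baseGroup X Y H).mul_mem (lam_conj_base X Y k2 hb1) hb2, ?_⟩
    rw [map_mul]
    group
  inv_mem' := by
    rintro w ⟨k, hk, b, hb, rfl⟩
    refine ⟨k⁻¹, K.inv_mem hk, (lamHom X Y k⁻¹)⁻¹ * b⁻¹ * lamHom X Y k⁻¹,
      lam_conj_base X Y k⁻¹ ((baseGroup X Y H).inv_mem hb), ?_⟩
    rw [map_inv]
    group

lemma mem_wreath_iff (X Y : Type*) (H : Subgroup (Perm X)) (K : Subgroup (Perm Y))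
    (w : Perm (X × Y)) :
    w ∈ wreath X Y H K ↔ ∃ k ∈ K, ∃ b ∈ baseGroup X Y H, w = lamHom X Y k * b := Iff.rfl

/-- The image of the (right) regular representation of a group `K` in `Perm K`. -/
def rightRegular (K : Type*) [Group K] : Subgroup (Perm K) where
  carrier := Set.range (fun k : K => Equiv.mulRight k)
  one_mem' := ⟨1, by ext x; simp⟩
  mul_mem' := by
    rintro _ _ ⟨a, rfl⟩ ⟨b, rfl⟩
    exact ⟨b * a, by ext x; simp [mul_assoc]⟩
  inv_mem' := by
    rintro _ ⟨a, rfl⟩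
    exact ⟨a⁻¹, by ext x; simp⟩

/-- The homomorphism `Γ : Aut(K) → Perm(X × K)`, `Γ(γ)(x,k) = (x, γ(k))`. -/
def gammaHom (X K : Type*) [Group K] : MulAut K →* Perm (X × K) where
  toFun γ := (Equiv.refl X).prodCongr γ.toEquiv
  map_one' := Equiv.ext fun p => rfl
  map_mul' := fun γ1 γ2 => Equiv.ext fun p => rfl

lemma gammaHom_apply (X K : Type*) [Group K] (γ : MulAut K) (x : X) (k : K) :
    gammaHom X K γ (x, k) = (x, γ k) := rfl

/-- The homomorphism `m ↦ m*` from `Perm X` to `Perm (X × K)`, `m*(x,k) = (m(x), k)`. -/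
def mstarHom (X K : Type*) : Perm X →* Perm (X × K) where
  toFun m := m.prodCongr (Equiv.refl K)
  map_one' := Equiv.ext fun p => rfl
  map_mul' := fun m1 m2 => Equiv.ext fun p => rfl

lemma mstarHom_apply (X K : Type*) (m : Perm X) (x : X) (k : K) :
    mstarHom X K m (x, k) = (m x, k) := rfl

/-
An element `α` of the normalizer of `W` also normalizes the base group `B`: since `K` acts
regularly, the point stabilizers of `W` lie in `B`, and every element of `B` is a product of two
of them. Conjugating the elements `h_y` of `B` by `α` and using the transitivity of `H` shows that
`α` permutes the blocks `X × {y}`, through a permutation `s` of `K`. Conjugating `Λ(K)` by `α`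
shows that `s` normalizes the right regular representation, so `s = γ ∘ (· * k)` with
`γ ∈ Aut(K)`. Then `Γ(γ)Λ(k)` moves the blocks exactly as `α` does, and `(Γ(γ)Λ(k))⁻¹α`
stabilizes every block.
-/

section Blocks

variable {X Y : Type*}

lemma mem_blockStab_of_forall_snd_apply {f : Perm (X × Y)} (hf : ∀ p, (f p).2 = p.2) :
    f ∈ blockStab X Y := by
  intro y
  ext q
  refine ⟨?_, fun hq => ⟨f⁻¹ q, ?_, f.apply_symm_apply q⟩⟩
  · rintro ⟨p, hp, rfl⟩
    exact (hf p).trans hp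
  · calc (f⁻¹ q).2 = (f (f⁻¹ q)).2 := (hf _).symm
      _ = y := by rwa [Perm.coe_inv, Equiv.apply_symm_apply]

lemma exists_perm_snd_apply [Nonempty X] (α : Perm (X × Y))
    (hα : ∀ x x' y, (α (x, y)).2 = (α (x', y)).2)
    (hα' : ∀ x x' y, (α⁻¹ (x, y)).2 = (α⁻¹ (x', y)).2) :
    ∃ s : Perm Y, ∀ p, (α p).2 = s p.2 := by
  let x₀ : X := Classical.arbitrary X
  refine ⟨⟨fun y => (α (x₀, y)).2, fun y => (α⁻¹ (x₀, y)).2, fun y => ?_, fun y => ?_⟩,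
    fun p => hα p.1 x₀ p.2⟩
  · calc (α⁻¹ (x₀, (α (x₀, y)).2)).2 = (α⁻¹ (α (x₀, y))).2 := hα' _ _ _
      _ = y := by rw [Perm.coe_inv, Equiv.symm_apply_apply]
  · calc (α (x₀, (α⁻¹ (x₀, y)).2)).2 = (α (α⁻¹ (x₀, y))).2 := hα _ _ _
      _ = y := by rw [Perm.coe_inv, Equiv.apply_symm_apply]

variable {H : Subgroup (Perm X)}

lemma snd_apply_of_mem_baseGroup {b : Perm (X × Y)} (hb : b ∈ baseGroup X Y H) (p : X × Y) :
    (b p).2 = p.2 := by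
  obtain ⟨x, y⟩ := p
  obtain ⟨h, -, hbh⟩ := hb y
  rw [hbh x]

lemma fiberPerm_mem_baseGroup {h : Perm X} (hh : h ∈ H) (y : Y) :
    fiberPerm X Y h y ∈ baseGroup X Y H := by
  intro y'
  by_cases hy : y' = y
  · subst hy
    exact ⟨h, hh, fiberPerm_apply_eq X Y h y'⟩
  · exact ⟨1, H.one_mem, fun x => fiberPerm_apply_ne X Y h y (x, y') hy⟩

lemma baseGroup_le_wreath (L : Subgroup (Perm Y)) : baseGroup X Y H ≤ wreath X Y H L :=
  fun b hb => ⟨1, L.one_mem, b, hb, by rw [map_one, one_mul]⟩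

end Blocks

section Holomorph

variable {K : Type*} [Group K]

/-- The hypothesis says that `s` normalizes the right regular representation of `K`; the
conclusion, that `s` lies in the holomorph `Aut(K) ⋉ K`. -/
lemma exists_mulAut_of_forall_map_mul (s : Perm K) (hs : ∀ k, ∃ c, ∀ y, s (y * k) = s y * c) :
    ∃ (γ : MulAut K) (k₀ : K), ∀ y, s y = γ (y * k₀) := by
  have hmul : ∀ y k, s (y * k) = s y * ((s 1)⁻¹ * s k) := by
    intro y k
    obtain ⟨c, hc⟩ := hs k
    have hc1 := hc 1
    rw [one_mul] at hc1
    rw [hc, hc1, inv_mul_cancel_left]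
  let γ : MulAut K :=
    { s.trans (Equiv.mulRight (s 1)⁻¹) with
      map_mul' := fun y k => by
        simp only [Equiv.toFun_as_coe, Equiv.trans_apply, Equiv.coe_mulRight, hmul]
        group }
  refine ⟨γ, γ.symm (s 1), fun y => ?_⟩
  rw [map_mul, MulEquiv.apply_symm_apply]
  exact (inv_mul_cancel_right (s y) (s 1)).symm

end Holomorph

section RegularWreath

variable {X K : Type*} [Group K] {H : Subgroup (Perm X)}

lemma mem_wreath_rightRegular_iff {w : Perm (X × K)} :
    w ∈ wreath X K H (rightRegular K) ↔
      ∃ k : K, ∃ b ∈ baseGroup X K H, w = lamHom X K (Equiv.mulRight k) * b := by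
  constructor
  · rintro ⟨-, ⟨k, rfl⟩, b, hb, rfl⟩
    exact ⟨k, b, hb, rfl⟩
  · rintro ⟨k, b, hb, rfl⟩
    exact ⟨_, ⟨k, rfl⟩, b, hb, rfl⟩

lemma lamHom_mulRight_mem_wreath (k : K) :
    lamHom X K (Equiv.mulRight k) ∈ wreath X K H (rightRegular K) :=
  ⟨Equiv.mulRight k, ⟨k, rfl⟩, 1, one_mem _, (mul_one _).symm⟩

lemma snd_lamHom_mulRight_mul_apply {b : Perm (X × K)} (hb : b ∈ baseGroup X K H) (k : K)
    (p : X × K) : ((lamHom X K (Equiv.mulRight k) * b) p).2 = p.2 * k :=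
  congrArg (· * k) (snd_apply_of_mem_baseGroup hb p)

lemma mem_baseGroup_of_mem_wreath_of_apply_eq {w : Perm (X × K)}
    (hw : w ∈ wreath X K H (rightRegular K)) {p : X × K} (hp : w p = p) :
    w ∈ baseGroup X K H := by
  obtain ⟨k, b, hb, rfl⟩ := mem_wreath_rightRegular_iff.mp hw
  have hk : k = 1 := by
    have hsnd := snd_lamHom_mulRight_mul_apply hb k p
    rw [hp] at hsnd
    exact left_eq_mul.mp hsnd
  rwa [hk, Equiv.mulRight_one, map_one, one_mul]

variable {α : Perm (X × K)}
  (hα : α ∈ Subgroup.normalizer ((wreath X K H (rightRegular K) : Subgroup (Perm (X × K))) :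
    Set (Perm (X × K))))
include hα

lemma conj_mem_baseGroup_of_apply_eq {b : Perm (X × K)} (hb : b ∈ baseGroup X K H) {p : X × K}
    (hp : b p = p) : α * b * α⁻¹ ∈ baseGroup X K H :=
  mem_baseGroup_of_mem_wreath_of_apply_eq
    ((Subgroup.mem_normalizer_iff.mp hα b).mp (baseGroup_le_wreath _ hb)) (p := α p)
    (by simp [Perm.mul_apply, hp])

lemma conj_mem_baseGroup {b : Perm (X × K)} (hb : b ∈ baseGroup X K H) :
    α * b * α⁻¹ ∈ baseGroup X K H := by
  rcases isEmpty_or_nonempty X with hX | ⟨⟨x₀⟩⟩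
  · rw [Subsingleton.elim (α * b * α⁻¹) 1]
    exact one_mem _
  rcases subsingleton_or_nontrivial K with hK | hK
  · obtain ⟨k, b', hb', hconj⟩ := mem_wreath_rightRegular_iff.mp
      ((Subgroup.mem_normalizer_iff.mp hα b).mp (baseGroup_le_wreath _ hb))
    rwa [hconj, Subsingleton.elim k 1, Equiv.mulRight_one, map_one, one_mul]
  -- `b = h₁ * (h₁⁻¹ * b)` is a product of two elements of `W` fixing a point:
  -- `h₁` fixes the block `X × {y}` pointwise and `h₁⁻¹ * b` fixes `(x₀, 1)`.
  obtain ⟨h, hh, hbh⟩ := hb 1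
  obtain ⟨y, hy⟩ := exists_ne (1 : K)
  have hF := fiberPerm_mem_baseGroup hh (1 : K)
  have hconjF : α * fiberPerm X K h 1 * α⁻¹ ∈ baseGroup X K H :=
    conj_mem_baseGroup_of_apply_eq hα hF (fiberPerm_apply_ne X K h 1 (x₀, y) hy)
  have hconjR : α * ((fiberPerm X K h 1)⁻¹ * b) * α⁻¹ ∈ baseGroup X K H :=
    conj_mem_baseGroup_of_apply_eq hα (mul_mem (inv_mem hF) hb) (p := (x₀, 1)) (by
      rw [Perm.mul_apply, hbh, ← fiberPerm_apply_eq X K h 1, Perm.coe_inv,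
        Equiv.symm_apply_apply])
  convert mul_mem hconjF hconjR using 1
  group

lemma snd_apply_eq_of_mem_normalizer (hH : ∀ x x' : X, ∃ h ∈ H, h x = x') (x x' : X) (y : K) :
    (α (x, y)).2 = (α (x', y)).2 := by
  obtain ⟨h, hh, rfl⟩ := hH x' x
  have hsnd := snd_apply_of_mem_baseGroup
    (conj_mem_baseGroup hα (fiberPerm_mem_baseGroup hh y)) (α (x', y))
  simpa [Perm.mul_apply, fiberPerm_apply_eq] using hsnd

lemma exists_map_mul_eq_mul_of_mem_normalizer [Nonempty X] {s : Perm K}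
    (hs : ∀ p, (α p).2 = s p.2) (k : K) : ∃ c, ∀ y, s (y * k) = s y * c := by
  obtain ⟨c, b, hb, hconj⟩ := mem_wreath_rightRegular_iff.mp
    ((Subgroup.mem_normalizer_iff.mp hα _).mp (lamHom_mulRight_mem_wreath (H := H) k))
  refine ⟨c, fun y => ?_⟩
  let x₀ : X := Classical.arbitrary X
  calc s (y * k) = (α (lamHom X K (Equiv.mulRight k) (x₀, y))).2 := (hs (x₀, y * k)).symm
    _ = ((α * lamHom X K (Equiv.mulRight k) * α⁻¹) (α (x₀, y))).2 := by simp [Perm.mul_apply]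
    _ = s y * c := by rw [hconj, snd_lamHom_mulRight_mul_apply hb, hs]

end RegularWreath

section Automorphisms

variable {X K : Type*} [Group K] {H : Subgroup (Perm X)}

lemma gammaHom_inv_apply (γ : MulAut K) (x : X) (y : K) :
    (gammaHom X K γ)⁻¹ (x, y) = (x, γ⁻¹ y) := by
  rw [← map_inv]
  rfl

lemma gammaHom_conj_mem_baseGroup (γ : MulAut K) {b : Perm (X × K)}
    (hb : b ∈ baseGroup X K H) :
    gammaHom X K γ * b * (gammaHom X K γ)⁻¹ ∈ baseGroup X K H := by
  intro y
  obtain ⟨h, hh, hbh⟩ := hb (γ⁻¹ y)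
  refine ⟨h, hh, fun x => ?_⟩
  rw [Perm.mul_apply, Perm.mul_apply, gammaHom_inv_apply, hbh, gammaHom_apply,
    MulAut.apply_inv_self]

lemma gammaHom_conj_lamHom_mulRight (γ : MulAut K) (k : K) :
    gammaHom X K γ * lamHom X K (Equiv.mulRight k) * (gammaHom X K γ)⁻¹ =
      lamHom X K (Equiv.mulRight (γ k)) := by
  ext ⟨x, y⟩
  · rfl
  · simp [Perm.mul_apply, gammaHom_inv_apply, gammaHom_apply, lamHom_apply]

lemma gammaHom_conj_mem_wreath (γ : MulAut K) {w : Perm (X × K)}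
    (hw : w ∈ wreath X K H (rightRegular K)) :
    gammaHom X K γ * w * (gammaHom X K γ)⁻¹ ∈ wreath X K H (rightRegular K) := by
  obtain ⟨k, b, hb, rfl⟩ := mem_wreath_rightRegular_iff.mp hw
  refine mem_wreath_rightRegular_iff.mpr
    ⟨γ k, _, gammaHom_conj_mem_baseGroup γ hb, ?_⟩
  rw [← gammaHom_conj_lamHom_mulRight]
  group

lemma gammaHom_mem_normalizer (γ : MulAut K) :
    gammaHom X K γ ∈ Subgroup.normalizer
      ((wreath X K H (rightRegular K) : Subgroup (Perm (X × K))) : Set (Perm (X × K))) := by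
  refine Subgroup.mem_normalizer_iff.mpr fun w => ⟨gammaHom_conj_mem_wreath γ, fun hw => ?_⟩
  convert gammaHom_conj_mem_wreath γ⁻¹ hw using 1
  rw [map_inv]
  group

end Automorphisms

/-- **Lemma F.** With `Y = K` regular and `H ≤ Perm X` transitive, the normalizer `N` of
`W = H ≀ K` in `Perm Z` satisfies `N = (Γ(Aut K)·Λ(K))·(N ∩ S_K(Z))`. -/
theorem normalizer_eq_gamma_lam_blockStab {X : Type*} (K : Type*) [Group K]
    (H : Subgroup (Perm X)) (hH : ∀ x x' : X, ∃ h ∈ H, h x = x') (α : Perm (X × K)) :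
    α ∈ Subgroup.normalizer ((wreath X K H (rightRegular K) : Subgroup (Perm (X × K))) : Set (Perm (X × K))) ↔
      ∃ (γ : MulAut K) (k : K) (f : Perm (X × K)),
        f ∈ Subgroup.normalizer ((wreath X K H (rightRegular K) : Subgroup (Perm (X × K))) : Set (Perm (X × K))) ∧ f ∈ blockStab X K ∧
        α = gammaHom X K γ * lamHom X K (Equiv.mulRight k) * f := by
  have hΓΛ (γ : MulAut K) (k : K) :=
    mul_mem (gammaHom_mem_normalizer (H := H) γ)
      (Subgroup.le_normalizer (lamHom_mulRight_mem_wreath (H := H) k))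
  refine ⟨fun hα => ?_, fun ⟨γ, k, f, hf, _, hαf⟩ => hαf ▸ mul_mem (hΓΛ γ k) hf⟩
  rcases isEmpty_or_nonempty X with hX | hX
  · exact ⟨1, 1, α, hα, Subsingleton.elim 1 α ▸ one_mem _, by simp [Equiv.mulRight_one]⟩
  obtain ⟨s, hs⟩ := exists_perm_snd_apply α (snd_apply_eq_of_mem_normalizer hα hH)
    (snd_apply_eq_of_mem_normalizer (inv_mem hα) hH)
  obtain ⟨γ, k, hγ⟩ :=
    exists_mulAut_of_forall_map_mul s (exists_map_mul_eq_mul_of_mem_normalizer hα hs)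
  set g := gammaHom X K γ * lamHom X K (Equiv.mulRight k)
  have hg (q : X × K) : (g q).2 = γ (q.2 * k) := rfl
  refine ⟨γ, k, g⁻¹ * α, mul_mem (inv_mem (hΓΛ γ k)) hα,
    mem_blockStab_of_forall_snd_apply fun p => mul_right_cancel (b := k) (γ.injective ?_),
    (mul_inv_cancel_left g α).symm⟩
  rw [← hg, ← Perm.mul_apply, mul_inv_cancel_left, hs, hγ]
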